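/- Let x : ℕ → ℝⁿ and u : ℕ → ℝᵖ be sequences, let f : ℝⁿ → ℝⁿ, g : ℝⁿ → ℝ^{n×p}, let A : ℕ → ℝ^{n×n} and let P : ℕ → ℝ^{n×n} take symmetric positive definite values. Let x̄ ∈ ℝⁿ, δ ≥ 0, θ > 0, and let 0 < λ_low ≤ λ_up be such that for all t: λ_low ≤ λ_min(P(t)) and λ_max(P(t)) ≤ λ_up, with θ < √(λ_low). Assume for every t ∈ ℕ: (i) x(t+1) = f(x(t)) + g(x(t))u(t); (ii) ‖f(x(t)) − A(t)x(t)‖ ≤ δ; (iii) ‖A(t)x(t) + g(x(t))u(t) − x̄‖_{P(t)} − ‖x(t) − x̄‖_{P(t)} ≤ −θ‖x(t) − x̄‖; and (iv) ‖x(t+1) − x̄‖_{P(t+1)} ≤ ‖x(t+1) − x̄‖_{P(t)}. Then the tracking error ‖x(t) − x̄‖ is bounded and limsup_{t→∞} ‖x(t) − x̄‖ ≤ 3·λ_up·δ/(θ·√(λ_low)). (Stability and convergence of the one-step-ahead predictive control scheme, Theorem 2.) -/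

import Mathlib

/-!
`V t = ‖x t - x̄‖_{P t}` is a Lyapunov function. Write `x (t+1) - x̄` as the linearised prediction
`A x + g u - x̄` plus the linearisation error `f x - A x`. The triangle inequality for `‖·‖_{P t}`,
the stability constraint and the Loewner bounds `λ_low • 1 ≤ P t ≤ λ_up • 1` (which compare the
weighted and Euclidean norms) give `V (t+1) ≤ ρ V t + √λ_up δ` with `ρ = 1 - θ / √λ_up ∈ [0, 1)`.
Hence `V` is eventually below any bound exceeding `√λ_up δ / (1 - ρ) = λ_up δ / θ`, and
`‖x t - x̄‖ ≤ V t / √λ_low`.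
-/

open Matrix

/-- Euclidean norm on `ℝⁿ`: `‖z‖ = √(zᵀ z)`. -/
noncomputable def euclNorm {n : ℕ} (z : Fin n → ℝ) : ℝ :=
  Real.sqrt (z ⬝ᵥ z)

/-- Weighted norm `‖z‖_Q = √(zᵀ Q z)` for a positive definite matrix `Q`. -/
noncomputable def wnorm {n : ℕ} (Q : Matrix (Fin n) (Fin n) ℝ) (z : Fin n → ℝ) : ℝ :=
  Real.sqrt (z ⬝ᵥ Q.mulVec z)

open Filter Topology

section WeightedNorm

open scoped MatrixOrder

variable {n : ℕ} {Q : Matrix (Fin n) (Fin n) ℝ}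

lemma euclNorm_nonneg (z : Fin n → ℝ) : 0 ≤ euclNorm z :=
  Real.sqrt_nonneg _

lemma wnorm_eq_norm (hQ : Q.PosSemidef) (z : Fin n → ℝ) :
    wnorm Q z = @Norm.norm _ (Q.toSeminormedAddCommGroup hQ).toNorm z := by
  rw [wnorm, dotProduct_comm]
  rfl

lemma wnorm_add_le (hQ : Q.PosSemidef) (a b : Fin n → ℝ) :
    wnorm Q (a + b) ≤ wnorm Q a + wnorm Q b := by
  simp only [wnorm_eq_norm hQ]
  exact @norm_add_le _ (Q.toSeminormedAddCommGroup hQ).toSeminormedAddGroup a b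

lemma smul_one_le_of_le_iInf_eigenvalues (hQ : Q.IsHermitian) {c : ℝ}
    (h : c ≤ ⨅ i, hQ.eigenvalues i) : c • 1 ≤ Q := by
  rw [← Algebra.algebraMap_eq_smul_one, algebraMap_le_iff_le_spectrum hQ,
    hQ.spectrum_real_eq_range_eigenvalues]
  rintro _ ⟨i, rfl⟩
  exact h.trans (ciInf_le (Set.finite_range _).bddBelow i)

lemma le_smul_one_of_iSup_eigenvalues_le (hQ : Q.IsHermitian) {C : ℝ}
    (h : ⨆ i, hQ.eigenvalues i ≤ C) : Q ≤ C • 1 := by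
  rw [← Algebra.algebraMap_eq_smul_one, le_algebraMap_iff_spectrum_le hQ,
    hQ.spectrum_real_eq_range_eigenvalues]
  rintro _ ⟨i, rfl⟩
  exact (le_ciSup (Set.finite_range _).bddAbove i).trans h

lemma dotProduct_mulVec_le_of_le {R : Matrix (Fin n) (Fin n) ℝ} (h : Q ≤ R) (z : Fin n → ℝ) :
    z ⬝ᵥ Q *ᵥ z ≤ z ⬝ᵥ R *ᵥ z := by
  have := (Matrix.le_iff.mp h).dotProduct_mulVec_nonneg z
  rw [star_trivial, sub_mulVec, dotProduct_sub] at this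
  linarith

lemma sqrt_mul_euclNorm_le_wnorm {c : ℝ} (hc : 0 ≤ c) (hQ : c • 1 ≤ Q) (z : Fin n → ℝ) :
    √c * euclNorm z ≤ wnorm Q z := by
  rw [euclNorm, wnorm, ← Real.sqrt_mul hc]
  refine Real.sqrt_le_sqrt ?_
  simpa [smul_mulVec] using dotProduct_mulVec_le_of_le hQ z

lemma wnorm_le_sqrt_mul_euclNorm {C : ℝ} (hC : 0 ≤ C) (hQ : Q ≤ C • 1) (z : Fin n → ℝ) :
    wnorm Q z ≤ √C * euclNorm z := by
  rw [euclNorm, wnorm, ← Real.sqrt_mul hC]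
  refine Real.sqrt_le_sqrt ?_
  simpa [smul_mulVec] using dotProduct_mulVec_le_of_le hQ z

lemma wnorm_add_le_of_sub_le {C θ δ : ℝ} (hQ : Q.PosSemidef) (hC : 0 < C) (hQC : Q ≤ C • 1)
    (hθ : 0 ≤ θ) {a d z : Fin n → ℝ} (ha : wnorm Q a - wnorm Q z ≤ -θ * euclNorm z)
    (hd : euclNorm d ≤ δ) :
    wnorm Q (a + d) ≤ (1 - θ / √C) * wnorm Q z + √C * δ := by
  have hsC : 0 < √C := Real.sqrt_pos.2 hC
  have hdecr : θ / √C * wnorm Q z ≤ θ * euclNorm z :=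
    calc θ / √C * wnorm Q z ≤ θ / √C * (√C * euclNorm z) := by
          gcongr; exact wnorm_le_sqrt_mul_euclNorm hC.le hQC z
      _ = θ * euclNorm z := by field_simp
  have hpert : wnorm Q d ≤ √C * δ :=
    (wnorm_le_sqrt_mul_euclNorm hC.le hQC d).trans (by gcongr)
  linarith [wnorm_add_le hQ a d]

end WeightedNorm

lemma le_pow_mul_add_of_le_mul_add {V : ℕ → ℝ} {ρ c K : ℝ} (hρ : 0 ≤ ρ) (hK : ρ * K + c ≤ K)
    (h : ∀ t, V (t + 1) ≤ ρ * V t + c) (t : ℕ) : V t ≤ ρ ^ t * (V 0 - K) + K := by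
  induction t with
  | zero => simp
  | succ t ih =>
    calc V (t + 1) ≤ ρ * V t + c := h t
      _ ≤ ρ * (ρ ^ t * (V 0 - K) + K) + c := by gcongr
      _ ≤ ρ ^ (t + 1) * (V 0 - K) + K := by rw [pow_succ]; linarith

lemma exists_tendsto_of_le_mul_add {V : ℕ → ℝ} {ρ c : ℝ} (hρ0 : 0 ≤ ρ) (hρ1 : ρ < 1)
    (h : ∀ t, V (t + 1) ≤ ρ * V t + c) :
    ∃ b : ℕ → ℝ, (∀ t, V t ≤ b t) ∧ Tendsto b atTop (𝓝 (c / (1 - ρ))) := by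
  set K := c / (1 - ρ)
  have hK : ρ * K + c = K := by
    have : 1 - ρ ≠ 0 := sub_ne_zero.2 hρ1.ne'
    simp only [K]
    field_simp
    ring
  refine ⟨fun t => ρ ^ t * (V 0 - K) + K, le_pow_mul_add_of_le_mul_add hρ0 hK.le h, ?_⟩
  simpa using ((tendsto_pow_atTop_nhds_zero_of_lt_one hρ0 hρ1).mul_const (V 0 - K)).add_const K

lemma bddAbove_and_limsup_le_of_le_of_tendsto {e b : ℕ → ℝ} {L : ℝ} (he : ∀ t, 0 ≤ e t)
    (heb : ∀ t, e t ≤ b t) (hb : Tendsto b atTop (𝓝 L)) :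
    (∃ M, ∀ t, e t ≤ M) ∧ limsup e atTop ≤ L := by
  obtain ⟨M, hM⟩ := hb.bddAbove_range
  refine ⟨⟨M, fun t => (heb t).trans (hM ⟨t, rfl⟩)⟩, ?_⟩
  rw [← hb.limsup_eq]
  exact limsup_le_limsup (Eventually.of_forall heb) (isBoundedUnder_of ⟨0, he⟩).isCoboundedUnder_le
    hb.isBoundedUnder_le

/-- stability and convergence of the one-step-ahead predictive
control scheme (Theorem 2). Under the closed-loop dynamics, the linearization
error bound, the stability constraint, and the one-step optimality consequence,
the tracking error `‖x(t) − x̄‖` is bounded and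
`limsup_{t→∞} ‖x(t) − x̄‖ ≤ 3·lamUp·δ/(θ·√(lamLow))`. -/
theorem one_step_ahead_predictive_control_stability {n p : ℕ}
    (x : ℕ → (Fin n → ℝ)) (u : ℕ → (Fin p → ℝ))
    (f : (Fin n → ℝ) → (Fin n → ℝ)) (g : (Fin n → ℝ) → Matrix (Fin n) (Fin p) ℝ)
    (A : ℕ → Matrix (Fin n) (Fin n) ℝ)
    (P : ℕ → Matrix (Fin n) (Fin n) ℝ) (hP : ∀ t, (P t).PosDef)
    (xbar : Fin n → ℝ) (δ θ lamLow lamUp : ℝ)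
    (hδ : 0 ≤ δ) (hθ : 0 < θ) (hlamLow : 0 < lamLow) (hlam : lamLow ≤ lamUp)
    (hmin : ∀ t, lamLow ≤ ⨅ i, (hP t).1.eigenvalues i)
    (hmax : ∀ t, (⨆ i, (hP t).1.eigenvalues i) ≤ lamUp)
    (hθlow : θ < Real.sqrt lamLow)
    (hdyn : ∀ t, x (t + 1) = f (x t) + (g (x t)).mulVec (u t))
    (hlin : ∀ t, euclNorm (f (x t) - (A t).mulVec (x t)) ≤ δ)
    (hstab : ∀ t, wnorm (P t) ((A t).mulVec (x t) + (g (x t)).mulVec (u t) - xbar) -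
      wnorm (P t) (x t - xbar) ≤ -θ * euclNorm (x t - xbar))
    (hopt : ∀ t, wnorm (P (t + 1)) (x (t + 1) - xbar) ≤ wnorm (P t) (x (t + 1) - xbar)) :
    (∃ M : ℝ, ∀ t, euclNorm (x t - xbar) ≤ M) ∧
      Filter.limsup (fun t => euclNorm (x t - xbar)) Filter.atTop ≤
        3 * lamUp * δ / (θ * Real.sqrt lamLow) := by
  have hlamUp : 0 < lamUp := hlamLow.trans_le hlam
  have hsL : 0 < √lamLow := Real.sqrt_pos.2 hlamLow
  have hsU : 0 < √lamUp := Real.sqrt_pos.2 hlamUp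
  set ρ := 1 - θ / √lamUp
  have hρ0 : 0 ≤ ρ := sub_nonneg.2 <| (div_le_one hsU).2 <| hθlow.le.trans (Real.sqrt_le_sqrt hlam)
  have hρ1 : ρ < 1 := sub_lt_self _ (div_pos hθ hsU)
  have hrec (t : ℕ) : wnorm (P (t + 1)) (x (t + 1) - xbar) ≤
      ρ * wnorm (P t) (x t - xbar) + √lamUp * δ := by
    have hsplit : x (t + 1) - xbar =
        ((A t).mulVec (x t) + (g (x t)).mulVec (u t) - xbar) + (f (x t) - (A t).mulVec (x t)) := by
      rw [hdyn t]; abel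
    refine (hopt t).trans ?_
    rw [hsplit]
    exact wnorm_add_le_of_sub_le (hP t).posSemidef hlamUp
      (le_smul_one_of_iSup_eigenvalues_le (hP t).1 (hmax t)) hθ.le (hstab t) (hlin t)
  obtain ⟨b, hVb, hb⟩ := exists_tendsto_of_le_mul_add (V := fun t => wnorm (P t) (x t - xbar)) hρ0 hρ1 hrec
  have hbound (t : ℕ) : euclNorm (x t - xbar) ≤ b t / √lamLow :=
    (le_div_iff₀' hsL).2 <| (sqrt_mul_euclNorm_le_wnorm hlamLow.le
      (smul_one_le_of_le_iInf_eigenvalues (hP t).1 (hmin t)) _).trans (hVb t)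
  obtain ⟨hbdd, hlimsup⟩ :=
    bddAbove_and_limsup_le_of_le_of_tendsto (fun t => euclNorm_nonneg _) hbound (hb.div_const _)
  have hfix : √lamUp * δ / (1 - ρ) = lamUp * δ / θ := by
    simp only [ρ, sub_sub_cancel]
    field_simp
    rw [Real.sq_sqrt hlamUp.le, mul_comm]
  refine ⟨hbdd, hlimsup.trans ?_⟩
  rw [hfix, div_div]
  gcongr
  linarith [mul_nonneg hlamUp.le hδ]
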